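/- For every integer i ≥ 2 and every subset B ⊆ [n], one has Cons(V_B, i) = Gov(V_B, i). -/

import Mathlib

abbrev F2 := ZMod 2

namespace HigherGenus

abbrev V (ι : Type) := ι → F2

abbrev ML (ι : Type) (i : ℕ) := MultilinearMap F2 (fun _ : Fin i => V ι) F2

variable {ι : Type} [Fintype ι] [DecidableEq ι]

/-- The tensor product of a family of linear functionals, as a multilinear map. -/
noncomputable def funcTensor {i : ℕ} (L : Fin i → (V ι →ₗ[F2] F2)) : ML ι i :=
  (MultilinearMap.mkPiAlgebra F2 (Fin i) F2).compLinearMap L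

/-- `χ_{h 1} ⊗ ⋯ ⊗ χ_{h i}` as a multilinear map. -/
noncomputable def chiTensor (i : ℕ) (h : Fin i → ι) : ML ι i :=
  funcTensor (fun p => LinearMap.proj (h p))

/-- The governing tensor `φ_{(A,x)}`: the sum of `χ_{τ(1)}⊗⋯⊗χ_{τ(i)}` over all bijections
`τ : [i] ≃ A` placing `x` in one of the last two positions. -/
noncomputable def govTensor (i : ℕ) (A : Finset ι) (x : ι) : ML ι i :=
  ∑ τ : Fin i ≃ {a // a ∈ A},
    if ∀ p : Fin i, ((τ p : ι) = x → i ≤ (p : ℕ) + 2) then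
      chiTensor i (fun p => (τ p : ι)) else 0

/-- `Gov(V_B, i)`: the span of the governing tensors supported in `B`. -/
noncomputable def Gov (i : ℕ) (B : Finset ι) : Submodule F2 (ML ι i) :=
  Submodule.span F2
    {φ | ∃ A : Finset ι, ∃ x : ι, A ⊆ B ∧ A.card = i ∧ x ∈ A ∧ φ = govTensor i A x}

/-- `Multi~(V_B, i)`: the span of the injective pure tensors supported in `B`. -/
noncomputable def MultiT (i : ℕ) (B : Finset ι) : Submodule F2 (ML ι i) :=
  Submodule.span F2
    {φ | ∃ τ : Fin i → ι, Function.Injective τ ∧ (∀ p, τ p ∈ B) ∧ φ = chiTensor i τ}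

/-- Evaluation of a multilinear map at a fixed tuple, as a linear map. -/
def mEval {i : ℕ} (σ : Fin i → V ι) : ML ι i →ₗ[F2] F2 where
  toFun b := b σ
  map_add' _ _ := rfl
  map_smul' _ _ := rfl

/-- Plugging the vector `v` into the first slot of a multilinear map. -/
noncomputable def consMapL {i : ℕ} (v : V ι) : ML ι (i + 1) →ₗ[F2] ML ι i :=
  (LinearMap.applyₗ v).comp
    (multilinearCurryLeftEquiv F2 (fun _ : Fin (i + 1) => V ι) F2).toLinearMap

/-- The standard basis vector `e_j`. -/
def stdb (j : ι) : V ι := Pi.single j 1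

/-- The recursively defined subspaces `Cons(V_B, i)`. -/
noncomputable def Cons : (i : ℕ) → Finset ι → Submodule F2 (ML ι i)
  | 0, _ => ⊥
  | 1, B => Gov 1 B
  | 2, B => MultiT 2 B ⊓
      (⨅ σ : Fin 2 → V ι, LinearMap.ker (mEval σ - mEval (σ ∘ (Equiv.swap 0 1))))
  | 3, B => (MultiT 3 B ⊓
      (⨅ j ∈ B, Submodule.comap (consMapL (stdb j)) (Cons 2 (B.erase j)))) ⊓
      (⨅ j₁ : ι, ⨅ j₂ : ι, ⨅ j₃ : ι,
        LinearMap.ker (mEval ![stdb j₁, stdb j₂, stdb j₃]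
          + mEval ![stdb j₃, stdb j₁, stdb j₂] + mEval ![stdb j₂, stdb j₃, stdb j₁]))
  | (i+4), B => (MultiT (i+4) B ⊓
      (⨅ j ∈ B, Submodule.comap (consMapL (stdb j)) (Cons (i+3) (B.erase j)))) ⊓
      (⨅ j₁ : ι, ⨅ j₂ : ι, ⨅ _ : j₁ ≠ j₂,
        LinearMap.ker ((consMapL (stdb j₂)).comp (consMapL (stdb j₁))
          - (consMapL (stdb j₁)).comp (consMapL (stdb j₂))))



set_option linter.unusedSectionVars false
set_option maxHeartbeats 1000000


/-- coefficient of a multilinear map at a tuple of standard basis vectors -/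
def coef {i : ℕ} (b : ML ι i) (σ : Fin i → ι) : F2 := b (fun p => stdb (σ p))

lemma coef_eq_mEval {i : ℕ} (b : ML ι i) (σ : Fin i → ι) :
    coef b σ = mEval (fun p => stdb (σ p)) b := rfl

lemma stdb_apply (j x : ι) : stdb j x = if x = j then 1 else 0 := by
  simp [stdb, Pi.single_apply]

lemma chiTensor_apply {i : ℕ} (τ : Fin i → ι) (v : Fin i → V ι) :
    chiTensor i τ v = ∏ p, v p (τ p) := by
  simp [chiTensor, funcTensor]

lemma chiTensor_coef {i : ℕ} (τ σ : Fin i → ι) :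
    coef (chiTensor i τ) σ = if σ = τ then 1 else 0 := by
  rw [coef, chiTensor_apply]
  by_cases h : σ = τ
  · subst h
    rw [if_pos rfl]
    apply Finset.prod_eq_one
    intro p _
    simp [stdb_apply]
  · rw [if_neg h]
    obtain ⟨p, hp⟩ := Function.ne_iff.1 h
    apply Finset.prod_eq_zero (Finset.mem_univ p)
    rw [stdb_apply, if_neg (fun h' => hp h'.symm)]

lemma ml_ext {i : ℕ} {b₁ b₂ : ML ι i} (h : ∀ σ : Fin i → ι, coef b₁ σ = coef b₂ σ) :
    b₁ = b₂ := by
  apply Module.Basis.ext_multilinear (fun _ => Pi.basisFun F2 ι)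
  intro v
  have := h v
  simpa [coef, stdb] using this

lemma coef_sum {i : ℕ} {α : Type*} (s : Finset α) (f : α → ML ι i) (σ : Fin i → ι) :
    coef (∑ a ∈ s, f a) σ = ∑ a ∈ s, coef (f a) σ := by
  simp only [coef_eq_mEval, map_sum]

lemma coef_smul {i : ℕ} (c : F2) (b : ML ι i) (σ : Fin i → ι) :
    coef (c • b) σ = c * coef b σ := rfl

lemma reconstruct {i : ℕ} (b : ML ι i) :
    b = ∑ τ : Fin i → ι, coef b τ • chiTensor i τ := by
  apply ml_ext
  intro σ
  rw [coef_sum]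
  rw [Finset.sum_eq_single σ]
  · simp [coef_smul, chiTensor_coef]
  · intro τ _ hτ
    rw [coef_smul, chiTensor_coef, if_neg (fun h : σ = τ => hτ h.symm), mul_zero]
  · simp

lemma consMapL_coef {i : ℕ} (a : ι) (b : ML ι (i+1)) (σ : Fin i → ι) :
    coef (consMapL (stdb a) b) σ = coef b (Fin.cons a σ) := by
  have : (fun p => stdb ((Fin.cons a σ : Fin (i+1) → ι) p))
      = Fin.cons (stdb a) (fun p => stdb (σ p)) := by
    funext p
    refine Fin.cases ?_ (fun q => ?_) p <;> simp
  rw [coef, coef, this]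
  rfl


-- chunk2: GovD and Gov = GovD


/-- image of a tuple as a finset -/
def img {i : ℕ} (σ : Fin i → ι) : Finset ι := Finset.image σ Finset.univ

lemma mem_img {i : ℕ} (σ : Fin i → ι) (x : ι) : x ∈ img σ ↔ ∃ p, σ p = x := by
  simp [img]

lemma img_card {i : ℕ} {σ : Fin i → ι} (h : Function.Injective σ) : (img σ).card = i := by
  rw [img, Finset.card_image_of_injective _ h, Finset.card_univ, Fintype.card_fin]

/-- goodness of a tuple: injective with values in B -/
def good {i : ℕ} (B : Finset ι) (σ : Fin i → ι) : Prop :=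
  Function.Injective σ ∧ ∀ p, σ p ∈ B

instance {i : ℕ} (B : Finset ι) (σ : Fin i → ι) : Decidable (good B σ) :=
  inferInstanceAs (Decidable (Function.Injective σ ∧ ∀ p, σ p ∈ B))

def pa (k : ℕ) : Fin (k+2) := ⟨k, by omega⟩
def pb (k : ℕ) : Fin (k+2) := ⟨k+1, by omega⟩

lemma pa_ne_pb (k : ℕ) : pa k ≠ pb k := by
  simp [pa, pb, Fin.ext_iff]

/-- the coefficient-level description of `Gov (k+2) B` -/
noncomputable def GovD (k : ℕ) (B : Finset ι) : Submodule F2 (ML ι (k+2)) where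
  carrier := {b | ∃ d : Finset ι → ι → F2, ∀ σ, coef b σ =
      if good B σ then d (img σ) (σ (pa k)) + d (img σ) (σ (pb k)) else 0}
  add_mem' := by
    rintro a b ⟨d₁, h₁⟩ ⟨d₂, h₂⟩
    refine ⟨fun A y => d₁ A y + d₂ A y, fun σ => ?_⟩
    have : coef (a + b) σ = coef a σ + coef b σ := rfl
    rw [this, h₁, h₂]
    split <;> ring
  zero_mem' := by
    refine ⟨fun _ _ => 0, fun σ => ?_⟩
    have : coef (0 : ML ι (k+2)) σ = 0 := rfl
    rw [this]
    split <;> ring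
  smul_mem' := by
    rintro c b ⟨d, h⟩
    refine ⟨fun A y => c * d A y, fun σ => ?_⟩
    rw [coef_smul, h]
    split <;> ring

lemma mem_govD {k : ℕ} {B : Finset ι} {b : ML ι (k+2)} :
    b ∈ GovD k B ↔ ∃ d : Finset ι → ι → F2, ∀ σ, coef b σ =
      if good B σ then d (img σ) (σ (pa k)) + d (img σ) (σ (pb k)) else 0 := Iff.rfl

lemma lastcond_iff {k : ℕ} {σ : Fin (k+2) → ι} {x : ι} (hinj : Function.Injective σ)
    (hx : x ∈ img σ) :
    (∀ p : Fin (k+2), σ p = x → k+2 ≤ (p : ℕ) + 2) ↔ (σ (pa k) = x ∨ σ (pb k) = x) := by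
  constructor
  · intro h
    obtain ⟨p, hp⟩ := (mem_img σ x).1 hx
    have h1 := h p hp
    have h2 : (p : ℕ) < k + 2 := p.isLt
    have : (p : ℕ) = k ∨ (p : ℕ) = k + 1 := by omega
    rcases this with h' | h'
    · left; have hpp : p = pa k := Fin.ext h'; rw [← hpp]; exact hp
    · right; have hpp : p = pb k := Fin.ext h'; rw [← hpp]; exact hp
  · rintro (h | h) p hp
    · have : p = pa k := hinj (hp.trans h.symm)
      subst this; simp [pa]
    · have : p = pb k := hinj (hp.trans h.symm)
      subst this; simp [pb]

lemma govTensor_coef {i : ℕ} (A : Finset ι) (x : ι) (σ : Fin i → ι) :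
    coef (govTensor i A x) σ =
    if A.card = i ∧ Function.Injective σ ∧ (∀ p, σ p ∈ A) ∧
        (∀ p : Fin i, σ p = x → i ≤ (p : ℕ) + 2) then 1 else 0 := by
  rw [govTensor, coef_sum]
  by_cases h : A.card = i ∧ Function.Injective σ ∧ (∀ p, σ p ∈ A) ∧
      (∀ p : Fin i, σ p = x → i ≤ (p : ℕ) + 2)
  · rw [if_pos h]
    obtain ⟨hcard, hinj, hσA, hlast⟩ := h
    have hbij : Function.Bijective (fun p => (⟨σ p, hσA p⟩ : {a // a ∈ A})) := by
      rw [Fintype.bijective_iff_injective_and_card]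
      constructor
      · intro p q hpq
        exact hinj (congrArg Subtype.val hpq)
      · rw [Fintype.card_coe, hcard, Fintype.card_fin]
    set e : Fin i ≃ {a // a ∈ A} := Equiv.ofBijective _ hbij with he
    have hev : ∀ p, (e p : ι) = σ p := fun p => rfl
    rw [Finset.sum_eq_single e]
    · have hc : (∀ p : Fin i, ((e p : ι) = x → i ≤ (p : ℕ) + 2)) := by
        intro p hp; exact hlast p ((hev p) ▸ hp)
      rw [if_pos hc, chiTensor_coef, if_pos]
      funext p; exact (hev p).symm
    · intro τ _ hτ
      by_cases hc : ∀ p : Fin i, ((τ p : ι) = x → i ≤ (p : ℕ) + 2)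
      · rw [if_pos hc, chiTensor_coef, if_neg]
        intro hστ
        apply hτ
        apply Equiv.ext
        intro p
        apply Subtype.ext
        rw [hev p]
        exact (congrFun hστ p).symm
      · rw [if_neg hc]; rfl
    · intro hmem; exact absurd (Finset.mem_univ e) hmem
  · rw [if_neg h]
    apply Finset.sum_eq_zero
    intro τ _
    by_cases hc : ∀ p : Fin i, ((τ p : ι) = x → i ≤ (p : ℕ) + 2)
    · rw [if_pos hc, chiTensor_coef, if_neg]
      intro hστ
      apply h
      have hinj : Function.Injective σ := by
        rw [hστ]
        exact Subtype.val_injective.comp τ.injective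
      have hσA : ∀ p, σ p ∈ A := by
        intro p; rw [hστ]; exact (τ p).2
      have hcard : A.card = i := by
        rw [← Fintype.card_coe, ← Fintype.card_congr τ, Fintype.card_fin]
      exact ⟨hcard, hinj, hσA, fun p hp => hc p (by rw [← congrFun hστ p]; exact hp)⟩
    · rw [if_neg hc]; rfl

lemma mem_multiT_iff {i : ℕ} {B : Finset ι} {b : ML ι i} :
    b ∈ MultiT i B ↔ ∀ σ : Fin i → ι, ¬ good B σ → coef b σ = 0 := by
  constructor
  · intro hb
    have hle : MultiT i B ≤ ⨅ (σ : Fin i → ι) (_ : ¬ good B σ),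
        LinearMap.ker (mEval (fun p => stdb (σ p))) := by
      rw [MultiT, Submodule.span_le]
      rintro φ ⟨τ, hτinj, hτB, rfl⟩
      simp only [SetLike.mem_coe, Submodule.mem_iInf]
      intro σ hσ
      rw [LinearMap.mem_ker, ← coef_eq_mEval, chiTensor_coef, if_neg]
      rintro rfl
      exact hσ ⟨hτinj, hτB⟩
    intro σ hσ
    have := hle hb
    simp only [Submodule.mem_iInf] at this
    have := this σ hσ
    rw [LinearMap.mem_ker] at this
    rw [coef_eq_mEval]
    exact this
  · intro h
    rw [reconstruct b]
    apply Submodule.sum_mem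
    intro τ _
    by_cases hτ : good B τ
    · exact Submodule.smul_mem _ _ (Submodule.subset_span ⟨τ, hτ.1, hτ.2, rfl⟩)
    · rw [h τ hτ, zero_smul]
      exact Submodule.zero_mem _

lemma img_eq_of_subset {i : ℕ} {σ : Fin i → ι} {A : Finset ι} (hinj : Function.Injective σ)
    (hcard : A.card = i) (hσA : ∀ p, σ p ∈ A) : img σ = A := by
  apply Finset.eq_of_subset_of_card_le
  · intro x hx
    obtain ⟨p, hp⟩ := (mem_img σ x).1 hx
    exact hp ▸ hσA p
  · rw [img_card hinj, hcard]

lemma gov_eq_govD (k : ℕ) (B : Finset ι) : Gov (k+2) B = GovD k B := by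
  apply le_antisymm
  · rw [Gov, Submodule.span_le]
    rintro φ ⟨A, x, hAB, hcard, hxA, rfl⟩
    rw [SetLike.mem_coe, mem_govD]
    refine ⟨fun A' y => if A' = A ∧ y = x then 1 else 0, fun σ => ?_⟩
    beta_reduce
    rw [govTensor_coef]
    by_cases hg : good B σ
    · rw [if_pos hg]
      obtain ⟨hinj, hσB⟩ := hg
      by_cases hA : img σ = A
      · have hσA : ∀ p, σ p ∈ A := fun p => hA ▸ (mem_img σ (σ p)).2 ⟨p, rfl⟩
        have hxi : x ∈ img σ := hA ▸ hxA
        have hiff := lastcond_iff hinj hxi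
        by_cases hl : ∀ p : Fin (k+2), σ p = x → k+2 ≤ (p : ℕ) + 2
        · rw [if_pos ⟨hcard, hinj, hσA, hl⟩]
          rcases hiff.1 hl with h1 | h1
          · rw [if_pos ⟨hA, h1⟩, if_neg, add_zero]
            rintro ⟨-, h2⟩
            exact pa_ne_pb k (hinj (h1.trans h2.symm))
          · rw [if_neg, if_pos ⟨hA, h1⟩, zero_add]
            rintro ⟨-, h2⟩
            exact pa_ne_pb k (hinj (h2.trans h1.symm))
        · rw [if_neg (fun h => hl h.2.2.2)]
          rw [if_neg, if_neg, add_zero]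
          · rintro ⟨-, h2⟩; exact hl (hiff.2 (Or.inr h2))
          · rintro ⟨-, h1⟩; exact hl (hiff.2 (Or.inl h1))
      · rw [if_neg, if_neg (fun h => hA h.1), if_neg (fun h => hA h.1), add_zero]
        rintro ⟨hcard', hinj', hσA, -⟩
        exact hA (img_eq_of_subset hinj' hcard hσA)
    · rw [if_neg hg, if_neg]
      rintro ⟨hcard', hinj', hσA, -⟩
      exact hg ⟨hinj', fun p => hAB (hσA p)⟩
  · intro b hb
    obtain ⟨d, hd⟩ := mem_govD.1 hb
    have hbT : b = ∑ A ∈ B.powersetCard (k+2), ∑ x ∈ A, d A x • govTensor (k+2) A x := by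
      apply ml_ext
      intro σ
      rw [coef_sum]
      simp only [coef_sum, coef_smul, govTensor_coef, mul_ite, mul_one, mul_zero]
      rw [hd]
      by_cases hg : good B σ
      · obtain ⟨hinj, hσB⟩ := hg
        rw [if_pos ⟨hinj, hσB⟩]
        have hA₀ : img σ ∈ B.powersetCard (k+2) := by
          rw [Finset.mem_powersetCard]
          constructor
          · intro y hy
            obtain ⟨p, hp⟩ := (mem_img σ y).1 hy
            exact hp ▸ hσB p
          · exact img_card hinj
        rw [Finset.sum_eq_single (img σ)]
        · have hsub : ∀ x ∈ img σ,
              (if (img σ).card = k+2 ∧ Function.Injective σ ∧ (∀ p, σ p ∈ img σ) ∧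
                  (∀ p : Fin (k+2), σ p = x → k+2 ≤ (p : ℕ) + 2) then d (img σ) x else 0)
              = if σ (pa k) = x ∨ σ (pb k) = x then d (img σ) x else 0 := by
            intro x hx
            have hσi : ∀ p, σ p ∈ img σ := fun p => (mem_img σ (σ p)).2 ⟨p, rfl⟩
            by_cases hl : σ (pa k) = x ∨ σ (pb k) = x
            · rw [if_pos hl,
                if_pos ⟨img_card hinj, hinj, hσi, (lastcond_iff hinj hx).2 hl⟩]
            · rw [if_neg hl, if_neg]
              rintro ⟨-, -, -, h4⟩
              exact hl ((lastcond_iff hinj hx).1 h4)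
          rw [Finset.sum_congr rfl hsub]
          have : ∀ x ∈ img σ, (if σ (pa k) = x ∨ σ (pb k) = x then d (img σ) x else 0)
              = if x ∈ ({σ (pa k), σ (pb k)} : Finset ι) then d (img σ) x else 0 := by
            intro x _
            congr 1
            simp only [Finset.mem_insert, Finset.mem_singleton, eq_comm]
          rw [Finset.sum_congr rfl this, Finset.sum_ite_mem]
          have hss : img σ ∩ {σ (pa k), σ (pb k)} = {σ (pa k), σ (pb k)} := by
            apply Finset.inter_eq_right.2
            intro y hy
            rcases Finset.mem_insert.1 hy with h | h
            · exact h ▸ (mem_img σ _).2 ⟨pa k, rfl⟩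
            · rw [Finset.mem_singleton] at h
              exact h ▸ (mem_img σ _).2 ⟨pb k, rfl⟩
          rw [hss, Finset.sum_pair (fun h => pa_ne_pb k (hinj h))]
        · intro A hA hAne
          apply Finset.sum_eq_zero
          intro x hxA
          rw [if_neg]
          rintro ⟨hcard', hinj', hσA, -⟩
          exact hAne (img_eq_of_subset hinj' hcard' hσA).symm
        · intro h; exact absurd hA₀ h
      · rw [if_neg hg]
        symm
        apply Finset.sum_eq_zero
        intro A hA
        apply Finset.sum_eq_zero
        intro x hxA
        rw [Finset.mem_powersetCard] at hA
        rw [if_neg]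
        rintro ⟨hcard', hinj', hσA, -⟩
        exact hg ⟨hinj', fun p => hA.1 (hσA p)⟩
    rw [hbT]
    apply Submodule.sum_mem
    intro A hA
    apply Submodule.sum_mem
    intro x hxA
    rw [Finset.mem_powersetCard] at hA
    exact Submodule.smul_mem _ _
      (Submodule.subset_span ⟨A, x, hA.1, hA.2, hxA, rfl⟩)

section Ordered
variable [LinearOrder ι]

def ordList (A : Finset ι) (u v : ι) : List ι :=
  (((A.erase u).erase v).sort (· ≤ ·)) ++ [u, v]

def ord (k : ℕ) (A : Finset ι) (u v : ι) : Fin (k+2) → ι :=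
  fun p => (ordList A u v).getD p u

variable {k : ℕ} {A : Finset ι} {u v : ι}
  (hA : A.card = k + 2) (hu : u ∈ A) (hv : v ∈ A) (huv : u ≠ v)
include hA hu hv huv

lemma ordList_length : (ordList A u v).length = k + 2 := by
  have h1 : v ∈ A.erase u := Finset.mem_erase.2 ⟨fun h => huv h.symm, hv⟩
  rw [ordList, List.length_append, Finset.length_sort, Finset.card_erase_of_mem h1,
    Finset.card_erase_of_mem hu, hA]
  simp

lemma mem_ordList {x : ι} : x ∈ ordList A u v ↔ x ∈ A := by
  rw [ordList, List.mem_append, Finset.mem_sort, Finset.mem_erase, Finset.mem_erase]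
  constructor
  · rintro (⟨-, -, h⟩ | h)
    · exact h
    · simp only [List.mem_cons, List.mem_singleton, List.not_mem_nil, or_false] at h
      rcases h with rfl | rfl
      · exact hu
      · exact hv
  · intro hx
    by_cases h1 : x = u
    · right; simp [h1]
    by_cases h2 : x = v
    · right; simp [h2]
    · left; exact ⟨h2, h1, hx⟩

lemma ordList_nodup : (ordList A u v).Nodup := by
  rw [ordList, List.nodup_append]
  refine ⟨Finset.sort_nodup _ _, by simp [huv], ?_⟩
  intro x hx
  rw [Finset.mem_sort, Finset.mem_erase, Finset.mem_erase] at hx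
  simp only [List.mem_cons, List.mem_singleton, List.not_mem_nil, or_false]
  rintro b (rfl | rfl) rfl
  · exact hx.2.1 rfl
  · exact hx.1 rfl

lemma ord_apply (p : Fin (k+2)) :
    ord k A u v p = (ordList A u v)[(p : ℕ)]'(by rw [ordList_length hA hu hv huv]; exact p.isLt) := by
  rw [ord, List.getD_eq_getElem]

lemma ord_inj : Function.Injective (ord k A u v) := by
  intro p q hpq
  rw [ord_apply hA hu hv huv, ord_apply hA hu hv huv] at hpq
  exact Fin.ext ((ordList_nodup hA hu hv huv).getElem_inj_iff.1 hpq)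

lemma ord_img : img (ord k A u v) = A := by
  ext x
  rw [mem_img]
  constructor
  · rintro ⟨p, rfl⟩
    rw [ord_apply hA hu hv huv]
    exact (mem_ordList hA hu hv huv).1 (List.getElem_mem _)
  · intro hx
    obtain ⟨n, hn, hx⟩ := List.mem_iff_getElem.1 ((mem_ordList hA hu hv huv).2 hx)
    rw [ordList_length hA hu hv huv] at hn
    refine ⟨⟨n, hn⟩, ?_⟩
    rw [ord_apply hA hu hv huv]
    exact hx

lemma sortlen : (((A.erase u).erase v).sort (· ≤ ·)).length = k := by
  have h1 : v ∈ A.erase u := Finset.mem_erase.2 ⟨fun h => huv h.symm, hv⟩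
  rw [Finset.length_sort, Finset.card_erase_of_mem h1, Finset.card_erase_of_mem hu, hA]
  omega

lemma ord_pa : ord k A u v (pa k) = u := by
  rw [ord_apply hA hu hv huv]
  have hl := sortlen hA hu hv huv
  simp only [ordList]
  rw [List.getElem_append_right (by rw [hl]; exact le_refl _)]
  simp [hl, pa]

lemma ord_pb : ord k A u v (pb k) = v := by
  rw [ord_apply hA hu hv huv]
  have hl := sortlen hA hu hv huv
  simp only [ordList]
  rw [List.getElem_append_right (by rw [hl]; exact Nat.le_succ _)]
  simp [hl, pb]

lemma ord_good {B : Finset ι} (hAB : A ⊆ B) : good B (ord k A u v) := by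
  refine ⟨ord_inj hA hu hv huv, fun p => hAB ?_⟩
  have hm : ord k A u v p ∈ img (ord k A u v) := (mem_img _ _).2 ⟨p, rfl⟩
  rwa [ord_img hA hu hv huv] at hm

end Ordered

lemma img_cons {i : ℕ} (a : ι) (σ : Fin i → ι) : img (Fin.cons a σ) = insert a (img σ) := by
  ext x
  rw [mem_img, Finset.mem_insert, mem_img]
  constructor
  · rintro ⟨p, rfl⟩
    refine Fin.cases ?_ (fun q => ?_) p
    · left; rw [Fin.cons_zero]
    · right; exact ⟨q, by rw [Fin.cons_succ]⟩
  · rintro (rfl | ⟨q, rfl⟩)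
    · exact ⟨0, Fin.cons_zero _ _⟩
    · exact ⟨q.succ, Fin.cons_succ _ _ _⟩

lemma inj_cons_iff {i : ℕ} {a : ι} {σ : Fin i → ι} :
    Function.Injective (Fin.cons a σ : Fin (i+1) → ι) ↔ a ∉ img σ ∧ Function.Injective σ := by
  rw [Fin.cons_injective_iff]
  constructor <;> (rintro ⟨h1, h2⟩; refine ⟨?_, h2⟩)
  · intro hmem
    obtain ⟨p, hp⟩ := (mem_img σ a).1 hmem
    exact h1 ⟨p, hp⟩
  · rintro ⟨p, hp⟩
    exact h1 ((mem_img σ a).2 ⟨p, hp⟩)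

lemma good_cons_iff {i : ℕ} {B : Finset ι} {a : ι} {σ : Fin i → ι} (ha : a ∈ B) :
    good B (Fin.cons a σ : Fin (i+1) → ι) ↔ good (B.erase a) σ := by
  constructor
  · rintro ⟨hinj, hB⟩
    obtain ⟨hmem, hinj'⟩ := inj_cons_iff.1 hinj
    refine ⟨hinj', fun p => Finset.mem_erase.2 ⟨?_, ?_⟩⟩
    · intro h
      exact hmem ((mem_img σ a).2 ⟨p, h⟩)
    · have := hB p.succ
      rwa [Fin.cons_succ] at this
  · rintro ⟨hinj, hB⟩
    refine ⟨inj_cons_iff.2 ⟨?_, hinj⟩, fun p => ?_⟩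
    · intro hmem
      obtain ⟨p, hp⟩ := (mem_img σ a).1 hmem
      exact (Finset.mem_erase.1 (hB p)).1 hp
    · refine Fin.cases ?_ (fun q => ?_) p
      · rwa [Fin.cons_zero]
      · rw [Fin.cons_succ]
        exact Finset.mem_erase.1 (hB q) |>.2

lemma tail_good {i : ℕ} {B : Finset ι} {σ : Fin (i+1) → ι} (h : good B σ) :
    good (B.erase (σ 0)) (Fin.tail σ) := by
  rw [← good_cons_iff (h.2 0), Fin.cons_self_tail]
  exact h

lemma img_tail {i : ℕ} {σ : Fin (i+1) → ι} (hinj : Function.Injective σ) :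
    img (Fin.tail σ) = (img σ).erase (σ 0) := by
  have : σ = Fin.cons (σ 0) (Fin.tail σ) := (Fin.cons_self_tail σ).symm
  ext x
  rw [mem_img, Finset.mem_erase, mem_img]
  constructor
  · rintro ⟨q, rfl⟩
    exact ⟨fun h => Fin.succ_ne_zero q (hinj h), ⟨q.succ, rfl⟩⟩
  · rintro ⟨hne, ⟨p, rfl⟩⟩
    have hp0 : p ≠ 0 := fun h => hne (by rw [h])
    obtain ⟨q, rfl⟩ := Fin.exists_succ_eq_of_ne_zero hp0
    exact ⟨q, rfl⟩

lemma succ_pa (k : ℕ) : Fin.succ (pa k) = pa (k+1) := by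
  apply Fin.ext; simp [pa]

lemma succ_pb (k : ℕ) : Fin.succ (pb k) = pb (k+1) := by
  apply Fin.ext; simp [pb]

lemma cons_pa {k : ℕ} (a : ι) (σ : Fin (k+2) → ι) :
    (Fin.cons a σ : Fin (k+3) → ι) (pa (k+1)) = σ (pa k) := by
  rw [← succ_pa, Fin.cons_succ]

lemma cons_pb {k : ℕ} (a : ι) (σ : Fin (k+2) → ι) :
    (Fin.cons a σ : Fin (k+3) → ι) (pb (k+1)) = σ (pb k) := by
  rw [← succ_pb, Fin.cons_succ]

lemma tail_pa {k : ℕ} (σ : Fin (k+3) → ι) : Fin.tail σ (pa k) = σ (pa (k+1)) := by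
  rw [Fin.tail, ← succ_pa]

lemma tail_pb {k : ℕ} (σ : Fin (k+3) → ι) : Fin.tail σ (pb k) = σ (pb (k+1)) := by
  rw [Fin.tail, ← succ_pb]

section Key
variable [LinearOrder ι]

lemma govD_of_conditions {k : ℕ} {B : Finset ι} (c : (Fin (k+2) → ι) → F2)
    (hV : ∀ σ, ¬ good B σ → c σ = 0)
    (hH1 : ∀ σ σ' : Fin (k+2) → ι, good B σ → good B σ' → img σ = img σ' →
      ((σ' (pa k) = σ (pa k) ∧ σ' (pb k) = σ (pb k)) ∨
       (σ' (pa k) = σ (pb k) ∧ σ' (pb k) = σ (pa k))) → c σ = c σ')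
    (hH2 : ∀ A : Finset ι, A ⊆ B → A.card = k+2 → ∀ x y z : ι, x ∈ A → y ∈ A → z ∈ A →
      x ≠ y → y ≠ z → x ≠ z →
      c (ord k A x y) + c (ord k A y z) + c (ord k A x z) = 0) :
    ∃ d : Finset ι → ι → F2, ∀ σ, c σ =
      if good B σ then d (img σ) (σ (pa k)) + d (img σ) (σ (pb k)) else 0 := by
  classical
  refine ⟨fun A x => if h : A.Nonempty then
      (if A ⊆ B ∧ A.card = k+2 ∧ x ∈ A ∧ x ≠ A.min' h then c (ord k A (A.min' h) x) else 0)
    else 0, fun σ => ?_⟩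
  beta_reduce
  by_cases hg : good B σ
  · rw [if_pos hg]
    obtain ⟨hinj, hσB⟩ := hg
    have hcard : (img σ).card = k+2 := img_card hinj
    have hAB : img σ ⊆ B := by
      intro y hy; obtain ⟨p, hp⟩ := (mem_img σ y).1 hy; exact hp ▸ hσB p
    have hu : σ (pa k) ∈ img σ := (mem_img σ _).2 ⟨pa k, rfl⟩
    have hv : σ (pb k) ∈ img σ := (mem_img σ _).2 ⟨pb k, rfl⟩
    have huv : σ (pa k) ≠ σ (pb k) := fun h => pa_ne_pb k (hinj h)
    have hne : (img σ).Nonempty := ⟨_, hu⟩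
    have ha0 : (img σ).min' hne ∈ img σ := Finset.min'_mem _ hne
    have key : ∀ w w' : ι, w ∈ img σ → w' ∈ img σ → w ≠ w' →
        ((w = σ (pa k) ∧ w' = σ (pb k)) ∨ (w = σ (pb k) ∧ w' = σ (pa k))) →
        c σ = c (ord k (img σ) w w') := by
      intro w w' hw hw' hww' hor
      apply hH1 σ (ord k (img σ) w w') ⟨hinj, hσB⟩ (ord_good hcard hw hw' hww' hAB)
        (ord_img hcard hw hw' hww').symm
      rw [ord_pa hcard hw hw' hww', ord_pb hcard hw hw' hww']
      tauto
    by_cases h1 : σ (pa k) = (img σ).min' hne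
    · have hvne : σ (pb k) ≠ (img σ).min' hne := fun h => huv (h1.trans h.symm)
      have ha0v : (img σ).min' hne ≠ σ (pb k) := fun h => hvne h.symm
      have hc : c σ = c (ord k (img σ) ((img σ).min' hne) (σ (pb k))) :=
        key _ _ ha0 hv ha0v (Or.inl ⟨h1.symm, rfl⟩)
      rw [dif_pos hne, dif_pos hne, if_neg (fun hh => hh.2.2.2 h1),
        if_pos ⟨hAB, hcard, hv, hvne⟩, zero_add]
      exact hc
    · by_cases h2 : σ (pb k) = (img σ).min' hne
      · have ha0u : (img σ).min' hne ≠ σ (pa k) := fun h => h1 h.symm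
        have hc : c σ = c (ord k (img σ) ((img σ).min' hne) (σ (pa k))) :=
          key _ _ ha0 hu ha0u (Or.inr ⟨h2.symm, rfl⟩)
        rw [dif_pos hne, dif_pos hne, if_pos ⟨hAB, hcard, hu, h1⟩,
          if_neg (fun hh => hh.2.2.2 h2), add_zero]
        exact hc
      · have ha0u : (img σ).min' hne ≠ σ (pa k) := fun h => h1 h.symm
        have ha0v : (img σ).min' hne ≠ σ (pb k) := fun h => h2 h.symm
        have hc : c σ = c (ord k (img σ) (σ (pa k)) (σ (pb k))) :=
          key _ _ hu hv huv (Or.inl ⟨rfl, rfl⟩)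
        have h3 := hH2 (img σ) hAB hcard ((img σ).min' hne) (σ (pa k)) (σ (pb k))
          ha0 hu hv ha0u huv ha0v
        rw [dif_pos hne, dif_pos hne, if_pos ⟨hAB, hcard, hu, h1⟩,
          if_pos ⟨hAB, hcard, hv, h2⟩, hc]
        have h2z : (2 : F2) = 0 := by decide
        linear_combination h3 - (c (ord k (img σ) ((img σ).min' hne) (σ (pa k)))
          + c (ord k (img σ) ((img σ).min' hne) (σ (pb k)))) * h2z
  · rw [if_neg hg]
    exact hV σ hg

end Key

lemma img_comp_equiv {i : ℕ} (σ : Fin i → ι) (e : Equiv.Perm (Fin i)) :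
    img (σ ∘ e) = img σ := by
  ext x
  rw [mem_img, mem_img]
  constructor
  · rintro ⟨p, rfl⟩; exact ⟨e p, rfl⟩
  · rintro ⟨p, rfl⟩; exact ⟨e.symm p, by simp [Function.comp]⟩

lemma good_comp_equiv {i : ℕ} (B : Finset ι) (σ : Fin i → ι) (e : Equiv.Perm (Fin i)) :
    good B (σ ∘ e) ↔ good B σ := by
  constructor
  · rintro ⟨hinj, hB⟩
    refine ⟨fun p q h => ?_, fun p => ?_⟩
    · have := hinj (show (σ ∘ e) (e.symm p) = (σ ∘ e) (e.symm q) by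
        simp [Function.comp]; exact h)
      have h2 := congrArg e this
      simpa using h2
    · have := hB (e.symm p)
      simpa [Function.comp] using this
  · rintro ⟨hinj, hB⟩
    exact ⟨hinj.comp e.injective, fun p => hB (e p)⟩

lemma cons_cons_swap {i : ℕ} (a b : ι) (ρ : Fin i → ι) :
    (Fin.cons a (Fin.cons b ρ) : Fin (i+2) → ι) ∘ (Equiv.swap 0 1) =
      (Fin.cons b (Fin.cons a ρ) : Fin (i+2) → ι) := by
  funext p
  refine Fin.cases ?_ (fun q => ?_) p
  · rw [Function.comp_apply, Equiv.swap_apply_left, ← Fin.succ_zero_eq_one, Fin.cons_succ,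
      Fin.cons_zero, Fin.cons_zero]
  · refine Fin.cases ?_ (fun r => ?_) q
    · rw [Function.comp_apply, Fin.succ_zero_eq_one, Equiv.swap_apply_right, Fin.cons_zero,
        ← Fin.succ_zero_eq_one, Fin.cons_succ, Fin.cons_zero]
    · have h1 : (Equiv.swap (0 : Fin (i+2)) 1) r.succ.succ = r.succ.succ := by
        apply Equiv.swap_apply_of_ne_of_ne
        · exact Fin.succ_ne_zero _
        · intro h
          have := congrArg Fin.val h
          simp [Fin.val_succ] at this
      rw [Function.comp_apply, h1, Fin.cons_succ, Fin.cons_succ, Fin.cons_succ, Fin.cons_succ]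

/-- restriction of a GovD element is in GovD of the erased set -/
lemma govD_rest {k : ℕ} {B : Finset ι} {b : ML ι (k+3)} (hb : b ∈ GovD (k+1) B)
    {jj : ι} (hjj : jj ∈ B) : consMapL (stdb jj) b ∈ GovD k (B.erase jj) := by
  obtain ⟨d, hd⟩ := mem_govD.1 hb
  refine mem_govD.2 ⟨fun A y => d (insert jj A) y, fun σ => ?_⟩
  rw [consMapL_coef, hd]
  by_cases hg : good (B.erase jj) σ
  · rw [if_pos ((good_cons_iff hjj).2 hg), if_pos hg, img_cons, cons_pa, cons_pb]
  · rw [if_neg (fun h => hg ((good_cons_iff hjj).1 h)), if_neg hg]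

/-- GovD elements lie in MultiT -/
lemma govD_multiT {k : ℕ} {B : Finset ι} {b : ML ι (k+2)} (hb : b ∈ GovD k B) :
    b ∈ MultiT (k+2) B := by
  obtain ⟨d, hd⟩ := mem_govD.1 hb
  rw [mem_multiT_iff]
  intro σ hσ
  rw [hd, if_neg hσ]

/-- coefficients of GovD elements with arity ≥ 4 are symmetric in the first two slots -/
lemma govD_coef_swap {k : ℕ} {B : Finset ι} {b : ML ι (k+4)} (hb : b ∈ GovD (k+2) B)
    (j₁ j₂ : ι) (ρ : Fin (k+2) → ι) :
    coef b (Fin.cons j₁ (Fin.cons j₂ ρ)) = coef b (Fin.cons j₂ (Fin.cons j₁ ρ)) := by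
  obtain ⟨d, hd⟩ := mem_govD.1 hb
  have hcomp : (Fin.cons j₂ (Fin.cons j₁ ρ) : Fin (k+4) → ι)
      = (Fin.cons j₁ (Fin.cons j₂ ρ) : Fin (k+4) → ι) ∘ (Equiv.swap 0 1) := by
    rw [cons_cons_swap]
  rw [hd, hd, hcomp]
  have hgood := good_comp_equiv B (Fin.cons j₁ (Fin.cons j₂ ρ) : Fin (k+4) → ι)
      (Equiv.swap 0 1)
  have himg := img_comp_equiv (Fin.cons j₁ (Fin.cons j₂ ρ) : Fin (k+4) → ι) (Equiv.swap 0 1)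
  have hpa : ((Fin.cons j₁ (Fin.cons j₂ ρ) : Fin (k+4) → ι) ∘ (Equiv.swap 0 1)) (pa (k+2))
      = (Fin.cons j₁ (Fin.cons j₂ ρ) : Fin (k+4) → ι) (pa (k+2)) := by
    have hne1 : pa (k+2) ≠ 0 := by intro h; have := congrArg Fin.val h; simp [pa] at this
    have hne2 : pa (k+2) ≠ 1 := by
      intro h; have := congrArg Fin.val h; simp [pa, Fin.ext_iff] at this
    rw [Function.comp_apply, Equiv.swap_apply_of_ne_of_ne hne1 hne2]
  have hpb : ((Fin.cons j₁ (Fin.cons j₂ ρ) : Fin (k+4) → ι) ∘ (Equiv.swap 0 1)) (pb (k+2))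
      = (Fin.cons j₁ (Fin.cons j₂ ρ) : Fin (k+4) → ι) (pb (k+2)) := by
    have hne1 : pb (k+2) ≠ 0 := by intro h; have := congrArg Fin.val h; simp [pb] at this
    have hne2 : pb (k+2) ≠ 1 := by
      intro h; have := congrArg Fin.val h; simp [pb, Fin.ext_iff] at this
    rw [Function.comp_apply, Equiv.swap_apply_of_ne_of_ne hne1 hne2]
  by_cases hg : good B (Fin.cons j₁ (Fin.cons j₂ ρ) : Fin (k+4) → ι)
  · rw [if_pos hg, if_pos (hgood.2 hg), himg, hpa, hpb]
  · rw [if_neg hg, if_neg (fun h => hg (hgood.1 h))]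

/-- the key fact extracted from restrictions being of d-form -/
lemma coef_eq_of_rest {k : ℕ} {B : Finset ι} {b : ML ι (k+3)}
    (hrest : ∀ jj ∈ B, consMapL (stdb jj) b ∈ GovD k (B.erase jj))
    (σ σ' : Fin (k+3) → ι) (hσ : good B σ) (hσ' : good B σ') (h0 : σ 0 = σ' 0)
    (himg : img σ = img σ')
    (hpair : (σ' (pa (k+1)) = σ (pa (k+1)) ∧ σ' (pb (k+1)) = σ (pb (k+1))) ∨
             (σ' (pa (k+1)) = σ (pb (k+1)) ∧ σ' (pb (k+1)) = σ (pa (k+1)))) :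
    coef b σ = coef b σ' := by
  obtain ⟨d, hd⟩ := mem_govD.1 (hrest (σ 0) (hσ.2 0))
  have e1 : coef b σ = coef (consMapL (stdb (σ 0)) b) (Fin.tail σ) := by
    rw [consMapL_coef, Fin.cons_self_tail]
  have e2 : coef b σ' = coef (consMapL (stdb (σ 0)) b) (Fin.tail σ') := by
    rw [consMapL_coef, h0, Fin.cons_self_tail]
  rw [e1, e2, hd, hd]
  rw [if_pos (tail_good hσ), if_pos (h0 ▸ tail_good hσ')]
  rw [img_tail hσ.1, img_tail hσ'.1, himg, h0]
  rw [tail_pa, tail_pb, tail_pa, tail_pb]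
  rcases hpair with ⟨h1, h2⟩ | ⟨h1, h2⟩
  · rw [h1, h2]
  · rw [h1, h2, add_comm]

lemma stdb_comp_matrix3 (a b c : ι) :
    (fun p => stdb (![a, b, c] p)) = ![stdb a, stdb b, stdb c] := by
  funext p
  fin_cases p <;> rfl

lemma inj_mat3 {a b c : ι} (hab : a ≠ b) (hac : a ≠ c) (hbc : b ≠ c) :
    Function.Injective ![a, b, c] := by
  intro p q h
  fin_cases p <;> fin_cases q <;> simp_all

lemma img_mat3 (a b c : ι) : img ![a, b, c] = {a, b, c} := by
  ext x
  rw [mem_img]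
  constructor
  · rintro ⟨p, rfl⟩
    fin_cases p <;> simp
  · intro h
    rcases Finset.mem_insert.1 h with rfl | h
    · exact ⟨0, rfl⟩
    rcases Finset.mem_insert.1 h with rfl | h
    · exact ⟨1, rfl⟩
    · rw [Finset.mem_singleton] at h
      exact ⟨2, h.symm ▸ rfl⟩

lemma good_mat3 {B : Finset ι} {a b c : ι} :
    good B ![a, b, c] ↔ ((a ≠ b ∧ a ≠ c ∧ b ≠ c) ∧ (a ∈ B ∧ b ∈ B ∧ c ∈ B)) := by
  constructor
  · rintro ⟨hinj, hB⟩
    refine ⟨⟨?_, ?_, ?_⟩, hB 0, hB 1, hB 2⟩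
    · intro h; have := hinj (show ![a,b,c] 0 = ![a,b,c] 1 from h); simp at this
    · intro h; have := hinj (show ![a,b,c] 0 = ![a,b,c] 2 from h); simp at this
    · intro h; have := hinj (show ![a,b,c] 1 = ![a,b,c] 2 from h); simp at this
  · rintro ⟨⟨hab, hac, hbc⟩, hA, hB', hC⟩
    refine ⟨inj_mat3 hab hac hbc, fun p => ?_⟩
    fin_cases p <;> assumption

lemma pa0 : pa 0 = (0 : Fin 2) := by decide
lemma pb0 : pb 0 = (1 : Fin 2) := by decide
lemma mat3_pa {a b c : ι} : ![a, b, c] (pa 1) = b := rfl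
lemma mat3_pb {a b c : ι} : ![a, b, c] (pb 1) = c := rfl

lemma card3 {x y z : ι} (hxy : x ≠ y) (hyz : y ≠ z) (hxz : x ≠ z) :
    ({x, y, z} : Finset ι).card = 3 := by
  rw [Finset.card_insert_of_notMem (by simp [hxy, hxz]),
    Finset.card_insert_of_notMem (by simp [hyz]), Finset.card_singleton]

section Main
variable [LinearOrder ι]

lemma cons2_eq_govD (B : Finset ι) : Cons 2 B = GovD 0 B := by
  have hC : Cons 2 B = MultiT 2 B ⊓
      (⨅ σ : Fin 2 → V ι, LinearMap.ker (mEval σ - mEval (σ ∘ (Equiv.swap 0 1)))) := by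
    simp only [Cons]
  rw [hC]
  apply le_antisymm
  · intro b hb
    obtain ⟨hbM, hbS⟩ := Submodule.mem_inf.1 hb
    have hsymm : ∀ σ : Fin 2 → ι, coef b σ = coef b (σ ∘ Equiv.swap 0 1) := by
      intro σ
      have h := (Submodule.mem_iInf _).1 hbS (fun p => stdb (σ p))
      rw [LinearMap.mem_ker, LinearMap.sub_apply, sub_eq_zero] at h
      exact h
    refine mem_govD.2 (govD_of_conditions (coef b) (mem_multiT_iff.1 hbM) ?_ ?_)
    · intro σ σ' hσ hσ' himg hpair
      rcases hpair with ⟨h1, h2⟩ | ⟨h1, h2⟩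
      · have : σ' = σ := by
          funext p
          fin_cases p
          · exact h1
          · exact h2
        rw [this]
      · have : σ' = σ ∘ Equiv.swap 0 1 := by
          funext p
          fin_cases p
          · show σ' (pa 0) = σ (Equiv.swap 0 1 0)
            rw [Equiv.swap_apply_left]; exact h1
          · show σ' (pb 0) = σ (Equiv.swap 0 1 1)
            rw [Equiv.swap_apply_right]; exact h2
        rw [this, ← hsymm]
    · intro A hAB hcard x y z hx hy hz hxy hyz hxz
      exfalso
      have hsub : ({x, y, z} : Finset ι) ⊆ A := by
        intro t ht
        rcases Finset.mem_insert.1 ht with rfl | ht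
        · exact hx
        rcases Finset.mem_insert.1 ht with rfl | ht
        · exact hy
        · rw [Finset.mem_singleton] at ht; exact ht ▸ hz
      have := Finset.card_le_card hsub
      rw [card3 hxy hyz hxz, hcard] at this
      omega
  · intro b hb
    have hcoef : ∀ σ : Fin 2 → ι, coef b σ = coef b (σ ∘ Equiv.swap 0 1) := by
      intro σ
      obtain ⟨d, hd⟩ := mem_govD.1 hb
      rw [hd, hd]
      have hgood := good_comp_equiv B σ (Equiv.swap 0 1)
      have himg := img_comp_equiv σ (Equiv.swap 0 1)
      have hpa : (σ ∘ Equiv.swap 0 1) (pa 0) = σ (pb 0) := by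
        rw [Function.comp_apply, pa0, pb0, Equiv.swap_apply_left]
      have hpb : (σ ∘ Equiv.swap 0 1) (pb 0) = σ (pa 0) := by
        rw [Function.comp_apply, pa0, pb0, Equiv.swap_apply_right]
      by_cases hg : good B σ
      · rw [if_pos hg, if_pos (hgood.2 hg), himg, hpa, hpb, add_comm]
      · rw [if_neg hg, if_neg (fun h => hg (hgood.1 h))]
    have hbb : b = MultilinearMap.domDomCongr (Equiv.swap 0 1) b := by
      apply ml_ext
      intro σ
      exact hcoef σ
    refine Submodule.mem_inf.2 ⟨govD_multiT hb, (Submodule.mem_iInf _).2 fun σv => ?_⟩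
    rw [LinearMap.mem_ker, LinearMap.sub_apply, sub_eq_zero]
    have : mEval (σv ∘ Equiv.swap 0 1) b
        = mEval σv (MultilinearMap.domDomCongr (Equiv.swap 0 1) b) := rfl
    rw [this, ← hbb]

lemma cons3_eq_govD (h2 : ∀ B' : Finset ι, Cons 2 B' = GovD 0 B') (B : Finset ι) :
    Cons 3 B = GovD 1 B := by
  have hC : Cons 3 B = (MultiT 3 B ⊓
      (⨅ j ∈ B, Submodule.comap (consMapL (stdb j)) (Cons 2 (B.erase j)))) ⊓
      (⨅ j₁ : ι, ⨅ j₂ : ι, ⨅ j₃ : ι,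
        LinearMap.ker (mEval ![stdb j₁, stdb j₂, stdb j₃]
          + mEval ![stdb j₃, stdb j₁, stdb j₂] + mEval ![stdb j₂, stdb j₃, stdb j₁])) := by
    simp only [Cons]
  rw [hC]
  have estdb : ∀ (a b' c' : ι) (b : ML ι 3),
      mEval ![stdb a, stdb b', stdb c'] b = coef b ![a, b', c'] := by
    intro a b' c' b
    rw [coef_eq_mEval, stdb_comp_matrix3]
  apply le_antisymm
  · intro b hb
    obtain ⟨h12, hbHW⟩ := Submodule.mem_inf.1 hb
    obtain ⟨hbM, hbR⟩ := Submodule.mem_inf.1 h12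
    have hrest : ∀ jj ∈ B, consMapL (stdb jj) b ∈ GovD 0 (B.erase jj) := by
      intro jj hjj
      have h := (Submodule.mem_iInf _).1 hbR jj
      have h := (Submodule.mem_iInf _).1 h hjj
      rw [Submodule.mem_comap, h2] at h
      exact h
    have hHW : ∀ a b' c' : ι,
        coef b ![a, b', c'] + coef b ![c', a, b'] + coef b ![b', c', a] = 0 := by
      intro a b' c'
      have h := (Submodule.mem_iInf _).1
        ((Submodule.mem_iInf _).1 ((Submodule.mem_iInf _).1 hbHW a) b') c'
      rw [LinearMap.mem_ker, LinearMap.add_apply, LinearMap.add_apply] at h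
      rw [← estdb, ← estdb, ← estdb]
      exact h
    have h1k : ∀ σ σ' : Fin 3 → ι, good B σ → good B σ' → img σ = img σ' →
        ((σ' (pa 1) = σ (pa 1) ∧ σ' (pb 1) = σ (pb 1)) ∨
         (σ' (pa 1) = σ (pb 1) ∧ σ' (pb 1) = σ (pa 1))) → coef b σ = coef b σ' := by
      intro σ σ' hσ hσ' himg hpair
      have h00 : σ 0 = σ' 0 := by
        obtain ⟨p, hp⟩ := (mem_img σ (σ' 0)).1 (himg ▸ (mem_img σ' (σ' 0)).2 ⟨0, rfl⟩)
        have hp1 : p ≠ pa 1 := by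
          rintro rfl
          rcases hpair with ⟨h1, -⟩ | ⟨-, h1⟩
          · have := hσ'.1 (h1.trans hp)
            exact absurd (congrArg Fin.val this) (by norm_num [pa])
          · have := hσ'.1 (h1.trans hp)
            exact absurd (congrArg Fin.val this) (by norm_num [pb])
        have hp2 : p ≠ pb 1 := by
          rintro rfl
          rcases hpair with ⟨-, h1⟩ | ⟨h1, -⟩
          · have := hσ'.1 (h1.trans hp)
            exact absurd (congrArg Fin.val this) (by norm_num [pb])
          · have := hσ'.1 (h1.trans hp)
            exact absurd (congrArg Fin.val this) (by norm_num [pa])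
        have hp0 : p = 0 := by
          have := p.isLt
          have v1 : (p : ℕ) ≠ 1 := fun h => hp1 (Fin.ext h)
          have v2 : (p : ℕ) ≠ 2 := fun h => hp2 (Fin.ext h)
          apply Fin.ext
          simp only [Fin.val_zero]
          omega
        rw [← hp]
        rw [hp0]
      exact coef_eq_of_rest hrest σ σ' hσ hσ' h00 himg hpair
    refine mem_govD.2 (govD_of_conditions (coef b) (mem_multiT_iff.1 hbM) h1k ?_)
    intro A hAB hcard x y z hx hy hz hxy hyz hxz
    have hsub : ({x, y, z} : Finset ι) ⊆ A := by
      intro t ht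
      rcases Finset.mem_insert.1 ht with rfl | ht
      · exact hx
      rcases Finset.mem_insert.1 ht with rfl | ht
      · exact hy
      · rw [Finset.mem_singleton] at ht; exact ht ▸ hz
    have hA : ({x, y, z} : Finset ι) = A :=
      Finset.eq_of_subset_of_card_le hsub (by rw [hcard, card3 hxy hyz hxz])
    have hzx : z ≠ x := fun h => hxz h.symm
    have hzy : z ≠ y := fun h => hyz h.symm
    have hyx : y ≠ x := fun h => hxy h.symm
    have g1 : good B ![z, x, y] := good_mat3.2 ⟨⟨hzx, hzy, hxy⟩, hAB hz, hAB hx, hAB hy⟩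
    have g2 : good B ![x, y, z] := good_mat3.2 ⟨⟨hxy, hxz, hyz⟩, hAB hx, hAB hy, hAB hz⟩
    have g3 : good B ![y, x, z] := good_mat3.2 ⟨⟨hyx, hyz, hxz⟩, hAB hy, hAB hx, hAB hz⟩
    have g4 : good B ![y, z, x] := good_mat3.2 ⟨⟨hyz, hyx, hzx⟩, hAB hy, hAB hz, hAB hx⟩
    have i1 : img ![z, x, y] = A := by
      rw [img_mat3, ← hA]; ext t; simp; tauto
    have i2 : img ![x, y, z] = A := by rw [img_mat3, ← hA]
    have i3 : img ![y, x, z] = A := by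
      rw [img_mat3, ← hA]; ext t; simp; tauto
    have i4 : img ![y, z, x] = A := by
      rw [img_mat3, ← hA]; ext t; simp; tauto
    have e1 : coef b (ord 1 A x y) = coef b ![z, x, y] :=
      h1k _ _ (ord_good hcard hx hy hxy hAB) g1
        (by rw [ord_img hcard hx hy hxy, i1])
        (Or.inl ⟨by rw [mat3_pa, ord_pa hcard hx hy hxy],
          by rw [mat3_pb, ord_pb hcard hx hy hxy]⟩)
    have e2 : coef b (ord 1 A y z) = coef b ![x, y, z] :=
      h1k _ _ (ord_good hcard hy hz hyz hAB) g2
        (by rw [ord_img hcard hy hz hyz, i2])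
        (Or.inl ⟨by rw [mat3_pa, ord_pa hcard hy hz hyz],
          by rw [mat3_pb, ord_pb hcard hy hz hyz]⟩)
    have e3 : coef b (ord 1 A x z) = coef b ![y, x, z] :=
      h1k _ _ (ord_good hcard hx hz hxz hAB) g3
        (by rw [ord_img hcard hx hz hxz, i3])
        (Or.inl ⟨by rw [mat3_pa, ord_pa hcard hx hz hxz],
          by rw [mat3_pb, ord_pb hcard hx hz hxz]⟩)
    have e4 : coef b ![y, x, z] = coef b ![y, z, x] :=
      h1k _ _ g3 g4 (by rw [i3, i4])
        (Or.inr ⟨by rw [mat3_pa, mat3_pb], by rw [mat3_pb, mat3_pa]⟩)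
    rw [e1, e2, e3, e4]
    have hw := hHW x y z
    linear_combination hw
  · intro b hb
    refine Submodule.mem_inf.2 ⟨Submodule.mem_inf.2 ⟨govD_multiT hb,
      (Submodule.mem_iInf _).2 fun jj => (Submodule.mem_iInf _).2 fun hjj => ?_⟩, ?_⟩
    · rw [Submodule.mem_comap, h2]
      exact govD_rest hb hjj
    · refine (Submodule.mem_iInf _).2 fun j₁ => (Submodule.mem_iInf _).2 fun j₂ =>
        (Submodule.mem_iInf _).2 fun j₃ => ?_
      rw [LinearMap.mem_ker, LinearMap.add_apply, LinearMap.add_apply,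
        estdb, estdb, estdb]
      obtain ⟨d, hd⟩ := mem_govD.1 hb
      by_cases hg : good B ![j₁, j₂, j₃]
      · obtain ⟨⟨h12, h13, h23⟩, hm1, hm2, hm3⟩ := good_mat3.1 hg
        have hg2 : good B ![j₃, j₁, j₂] :=
          good_mat3.2 ⟨⟨fun h => h13 h.symm, fun h => h23 h.symm, h12⟩, hm3, hm1, hm2⟩
        have hg3 : good B ![j₂, j₃, j₁] :=
          good_mat3.2 ⟨⟨h23, fun h => h12 h.symm, fun h => h13 h.symm⟩, hm2, hm3, hm1⟩
        rw [hd, hd, hd, if_pos hg, if_pos hg2, if_pos hg3]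
        rw [img_mat3, img_mat3, img_mat3, mat3_pa, mat3_pa, mat3_pa,
          mat3_pb, mat3_pb, mat3_pb]
        have hs2 : ({j₃, j₁, j₂} : Finset ι) = {j₁, j₂, j₃} := by ext t; simp; tauto
        have hs3 : ({j₂, j₃, j₁} : Finset ι) = {j₁, j₂, j₃} := by ext t; simp; tauto
        rw [hs2, hs3]
        have h2z : (2 : F2) = 0 := by decide
        linear_combination (d {j₁, j₂, j₃} j₁ + d {j₁, j₂, j₃} j₂ + d {j₁, j₂, j₃} j₃) * h2z
      · have hg2 : ¬ good B ![j₃, j₁, j₂] := by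
          intro h
          obtain ⟨⟨a1, a2, a3⟩, m1, m2, m3⟩ := good_mat3.1 h
          exact hg (good_mat3.2 ⟨⟨a3, fun h => a1 h.symm, fun h => a2 h.symm⟩, m2, m3, m1⟩)
        have hg3 : ¬ good B ![j₂, j₃, j₁] := by
          intro h
          obtain ⟨⟨a1, a2, a3⟩, m1, m2, m3⟩ := good_mat3.1 h
          exact hg (good_mat3.2 ⟨⟨fun h => a2 h.symm, fun h => a3 h.symm, a1⟩, m3, m1, m2⟩)
        rw [hd, hd, hd, if_neg hg, if_neg hg2, if_neg hg3]
        norm_num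

lemma consS_eq_govD (m : ℕ) (ih : ∀ B' : Finset ι, Cons (m+3) B' = GovD (m+1) B')
    (B : Finset ι) : Cons (m+4) B = GovD (m+2) B := by
  have hC : Cons (m+4) B = (MultiT (m+4) B ⊓
      (⨅ j ∈ B, Submodule.comap (consMapL (stdb j)) (Cons (m+3) (B.erase j)))) ⊓
      (⨅ j₁ : ι, ⨅ j₂ : ι, ⨅ _ : j₁ ≠ j₂,
        LinearMap.ker ((consMapL (stdb j₂)).comp (consMapL (stdb j₁))
          - (consMapL (stdb j₁)).comp (consMapL (stdb j₂)))) := by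
    simp only [Cons]
  rw [hC]
  apply le_antisymm
  · intro b hb
    obtain ⟨h12, hbC⟩ := Submodule.mem_inf.1 hb
    obtain ⟨hbM, hbR⟩ := Submodule.mem_inf.1 h12
    have hrest : ∀ jj ∈ B, consMapL (stdb jj) b ∈ GovD (m+1) (B.erase jj) := by
      intro jj hjj
      have h := (Submodule.mem_iInf _).1 hbR jj
      have h := (Submodule.mem_iInf _).1 h hjj
      rw [Submodule.mem_comap, ih] at h
      exact h
    have hcomm : ∀ j₁ j₂ : ι, j₁ ≠ j₂ → ∀ ρ : Fin (m+2) → ι,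
        coef b (Fin.cons j₁ (Fin.cons j₂ ρ)) = coef b (Fin.cons j₂ (Fin.cons j₁ ρ)) := by
      intro j₁ j₂ hne ρ
      have h := (Submodule.mem_iInf _).1 ((Submodule.mem_iInf _).1
        ((Submodule.mem_iInf _).1 hbC j₁) j₂) hne
      rw [LinearMap.mem_ker, LinearMap.sub_apply, sub_eq_zero, LinearMap.comp_apply,
        LinearMap.comp_apply] at h
      have h2 := congrArg (fun b' => coef b' ρ) h
      simpa only [consMapL_coef] using h2
    have h1k : ∀ σ σ' : Fin (m+4) → ι, good B σ → good B σ' → img σ = img σ' →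
        ((σ' (pa (m+2)) = σ (pa (m+2)) ∧ σ' (pb (m+2)) = σ (pb (m+2))) ∨
         (σ' (pa (m+2)) = σ (pb (m+2)) ∧ σ' (pb (m+2)) = σ (pa (m+2)))) →
        coef b σ = coef b σ' := by
      intro σ σ' hσ hσ' himg hpair
      by_cases h00 : σ 0 = σ' 0
      · exact coef_eq_of_rest hrest σ σ' hσ hσ' h00 himg hpair
      · have hpane : (0 : Fin (m+4)) ≠ pa (m+2) := by
          intro h
          have h' := congrArg Fin.val h
          simp only [Fin.val_zero, pa] at h'
          omega
        have hpbne : (0 : Fin (m+4)) ≠ pb (m+2) := by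
          intro h
          have h' := congrArg Fin.val h
          simp only [Fin.val_zero, pb] at h'
          omega
        have hσ0u : σ 0 ≠ σ (pa (m+2)) := fun h => hpane (hσ.1 h)
        have hσ0v : σ 0 ≠ σ (pb (m+2)) := fun h => hpbne (hσ.1 h)
        have hσ'0a : σ' 0 ≠ σ' (pa (m+2)) := fun h => hpane (hσ'.1 h)
        have hσ'0b : σ' 0 ≠ σ' (pb (m+2)) := fun h => hpbne (hσ'.1 h)
        have hσ'0u : σ' 0 ≠ σ (pa (m+2)) := by
          rcases hpair with ⟨h1, h2⟩ | ⟨h1, h2⟩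
          · rw [← h1]; exact hσ'0a
          · rw [← h2]; exact hσ'0b
        have hσ'0v : σ' 0 ≠ σ (pb (m+2)) := by
          rcases hpair with ⟨h1, h2⟩ | ⟨h1, h2⟩
          · rw [← h2]; exact hσ'0b
          · rw [← h1]; exact hσ'0a
        have huv : σ (pa (m+2)) ≠ σ (pb (m+2)) := fun h => pa_ne_pb (m+2) (hσ.1 h)
        have hσ0A : σ 0 ∈ img σ := (mem_img σ _).2 ⟨0, rfl⟩
        have hσ'0A : σ' 0 ∈ img σ := himg ▸ (mem_img σ' _).2 ⟨0, rfl⟩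
        have huA : σ (pa (m+2)) ∈ img σ := (mem_img σ _).2 ⟨pa (m+2), rfl⟩
        have hvA : σ (pb (m+2)) ∈ img σ := (mem_img σ _).2 ⟨pb (m+2), rfl⟩
        have himgB : ∀ x ∈ img σ, x ∈ B := by
          intro x hx
          obtain ⟨p, hp⟩ := (mem_img σ x).1 hx
          exact hp ▸ hσ.2 p
        have hs01 : σ' 0 ∈ (img σ).erase (σ 0) :=
          Finset.mem_erase.2 ⟨fun h => h00 h.symm, hσ'0A⟩
        have hs10 : σ 0 ∈ (img σ).erase (σ' 0) :=
          Finset.mem_erase.2 ⟨h00, hσ0A⟩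
        have hCcard : (((img σ).erase (σ 0)).erase (σ' 0)).card = m+2 := by
          rw [Finset.card_erase_of_mem hs01, Finset.card_erase_of_mem hσ0A, img_card hσ.1]
          omega
        have huC : σ (pa (m+2)) ∈ ((img σ).erase (σ 0)).erase (σ' 0) :=
          Finset.mem_erase.2 ⟨fun h => hσ'0u h.symm,
            Finset.mem_erase.2 ⟨fun h => hσ0u h.symm, huA⟩⟩
        have hvC : σ (pb (m+2)) ∈ ((img σ).erase (σ 0)).erase (σ' 0) :=
          Finset.mem_erase.2 ⟨fun h => hσ'0v h.symm,
            Finset.mem_erase.2 ⟨fun h => hσ0v h.symm, hvA⟩⟩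
        have hCB : ∀ x ∈ ((img σ).erase (σ 0)).erase (σ' 0), x ∈ B := fun x hx =>
          himgB x (Finset.mem_erase.1 (Finset.mem_erase.1 hx).2).2
        have hρimg := ord_img hCcard huC hvC huv
        have hρinj := ord_inj hCcard huC hvC huv
        have hρpa := ord_pa hCcard huC hvC huv
        have hρpb := ord_pb hCcard huC hvC huv
        have hρC : ∀ r, ord m (((img σ).erase (σ 0)).erase (σ' 0)) (σ (pa (m+2)))
            (σ (pb (m+2))) r ∈ ((img σ).erase (σ 0)).erase (σ' 0) := by
          intro r
          have h := (mem_img (ord m (((img σ).erase (σ 0)).erase (σ' 0)) (σ (pa (m+2)))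
            (σ (pb (m+2)))) _).2 ⟨r, rfl⟩
          rwa [ord_img hCcard huC hvC huv] at h
        set ρ₀ := ord m (((img σ).erase (σ 0)).erase (σ' 0)) (σ (pa (m+2))) (σ (pb (m+2)))
          with hρ₀
        have mkgood : ∀ a a' : ι, a ∈ img σ → a' ∈ img σ → a ≠ a' →
            (a' ∈ ((img σ).erase (σ 0)).erase (σ' 0) → False) →
            (a ∈ ((img σ).erase (σ 0)).erase (σ' 0) → False) →
            good B (Fin.cons a (Fin.cons a' ρ₀) : Fin (m+4) → ι) := by
          intro a a' haA ha'A haa' ha'C haC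
          constructor
          · apply inj_cons_iff.2
            constructor
            · rw [img_cons, Finset.mem_insert, hρimg]
              rintro (h | h)
              · exact haa' h
              · exact haC h
            · apply inj_cons_iff.2
              refine ⟨?_, hρinj⟩
              rw [hρimg]
              exact fun h => ha'C h
          · intro p
            refine Fin.cases ?_ (fun q => ?_) p
            · rw [Fin.cons_zero]; exact himgB _ haA
            · rw [Fin.cons_succ]
              refine Fin.cases ?_ (fun r => ?_) q
              · rw [Fin.cons_zero]; exact himgB _ ha'A
              · rw [Fin.cons_succ]
                exact hCB _ (hρC r)
        have hgoodτ : good B (Fin.cons (σ 0) (Fin.cons (σ' 0) ρ₀) : Fin (m+4) → ι) :=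
          mkgood _ _ hσ0A hσ'0A h00
            (fun h => (Finset.mem_erase.1 h).1 rfl)
            (fun h => (Finset.mem_erase.1 (Finset.mem_erase.1 h).2).1 rfl)
        have hgoodτ' : good B (Fin.cons (σ' 0) (Fin.cons (σ 0) ρ₀) : Fin (m+4) → ι) :=
          mkgood _ _ hσ'0A hσ0A (fun h => h00 h.symm)
            (fun h => (Finset.mem_erase.1 (Finset.mem_erase.1 h).2).1 rfl)
            (fun h => (Finset.mem_erase.1 h).1 rfl)
        have hτimg : img (Fin.cons (σ 0) (Fin.cons (σ' 0) ρ₀) : Fin (m+4) → ι) = img σ := by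
          rw [img_cons, img_cons, hρimg, Finset.insert_erase hs01, Finset.insert_erase hσ0A]
        have hτ'img : img (Fin.cons (σ' 0) (Fin.cons (σ 0) ρ₀) : Fin (m+4) → ι) = img σ := by
          rw [img_cons, img_cons, hρimg]
          have hcomm' : ((img σ).erase (σ 0)).erase (σ' 0)
              = ((img σ).erase (σ' 0)).erase (σ 0) := by
            ext t
            simp only [Finset.mem_erase]
            tauto
          rw [hcomm', Finset.insert_erase hs10, Finset.insert_erase hσ'0A]
        have hτpa : (Fin.cons (σ 0) (Fin.cons (σ' 0) ρ₀) : Fin (m+4) → ι) (pa (m+2))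
            = σ (pa (m+2)) := by rw [cons_pa, cons_pa, hρpa]
        have hτpb : (Fin.cons (σ 0) (Fin.cons (σ' 0) ρ₀) : Fin (m+4) → ι) (pb (m+2))
            = σ (pb (m+2)) := by rw [cons_pb, cons_pb, hρpb]
        have hτ'pa : (Fin.cons (σ' 0) (Fin.cons (σ 0) ρ₀) : Fin (m+4) → ι) (pa (m+2))
            = σ (pa (m+2)) := by rw [cons_pa, cons_pa, hρpa]
        have hτ'pb : (Fin.cons (σ' 0) (Fin.cons (σ 0) ρ₀) : Fin (m+4) → ι) (pb (m+2))
            = σ (pb (m+2)) := by rw [cons_pb, cons_pb, hρpb]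
        have step1 : coef b σ = coef b (Fin.cons (σ 0) (Fin.cons (σ' 0) ρ₀)) :=
          coef_eq_of_rest hrest _ _ hσ hgoodτ (by rw [Fin.cons_zero]) hτimg.symm
            (Or.inl ⟨hτpa, hτpb⟩)
        have step2 : coef b (Fin.cons (σ 0) (Fin.cons (σ' 0) ρ₀))
            = coef b (Fin.cons (σ' 0) (Fin.cons (σ 0) ρ₀)) := hcomm _ _ h00 ρ₀
        have step3 : coef b σ' = coef b (Fin.cons (σ' 0) (Fin.cons (σ 0) ρ₀)) := by
          apply coef_eq_of_rest hrest _ _ hσ' hgoodτ' (by rw [Fin.cons_zero])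
            (himg.symm.trans hτ'img.symm)
          rcases hpair with ⟨h1, h2⟩ | ⟨h1, h2⟩
          · exact Or.inl ⟨hτ'pa.trans h1.symm, hτ'pb.trans h2.symm⟩
          · exact Or.inr ⟨hτ'pa.trans h2.symm, hτ'pb.trans h1.symm⟩
        rw [step1, step2, ← step3]
    refine mem_govD.2 (govD_of_conditions (coef b) (mem_multiT_iff.1 hbM) h1k ?_)
    intro A hAB hcard x y z hx hy hz hxy hyz hxz
    have hye : y ∈ A.erase x := Finset.mem_erase.2 ⟨fun h => hxy h.symm, hy⟩
    have hze : z ∈ (A.erase x).erase y :=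
      Finset.mem_erase.2 ⟨fun h => hyz h.symm, Finset.mem_erase.2 ⟨fun h => hxz h.symm, hz⟩⟩
    have hpos : 0 < (((A.erase x).erase y).erase z).card := by
      rw [Finset.card_erase_of_mem hze, Finset.card_erase_of_mem hye,
        Finset.card_erase_of_mem hx, hcard]
      omega
    obtain ⟨a, ha⟩ := Finset.card_pos.1 hpos
    have haz : a ≠ z := (Finset.mem_erase.1 ha).1
    have hay : a ≠ y := (Finset.mem_erase.1 (Finset.mem_erase.1 ha).2).1
    have hax : a ≠ x := (Finset.mem_erase.1 (Finset.mem_erase.1 (Finset.mem_erase.1 ha).2).2).1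
    have haA : a ∈ A := (Finset.mem_erase.1 (Finset.mem_erase.1 (Finset.mem_erase.1 ha).2).2).2
    have haB : a ∈ B := hAB haA
    obtain ⟨d, hd⟩ := mem_govD.1 (hrest a haB)
    have hcarde : (A.erase a).card = m+3 := by
      rw [Finset.card_erase_of_mem haA, hcard]
      omega
    have key : ∀ p q : ι, p ∈ A → q ∈ A → p ≠ q → a ≠ p → a ≠ q →
        coef b (ord (m+2) A p q) = d (A.erase a) p + d (A.erase a) q := by
      intro p q hp hq hpq hap haq
      have hpe : p ∈ A.erase a := Finset.mem_erase.2 ⟨fun h => hap h.symm, hp⟩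
      have hqe : q ∈ A.erase a := Finset.mem_erase.2 ⟨fun h => haq h.symm, hq⟩
      have hρgood : good (B.erase a) (ord (m+1) (A.erase a) p q) :=
        ord_good hcarde hpe hqe hpq (Finset.erase_subset_erase a hAB)
      have step : coef b (ord (m+2) A p q)
          = coef b (Fin.cons a (ord (m+1) (A.erase a) p q)) := by
        apply h1k
        · exact ord_good hcard hp hq hpq hAB
        · constructor
          · apply inj_cons_iff.2
            refine ⟨?_, ord_inj hcarde hpe hqe hpq⟩
            rw [ord_img hcarde hpe hqe hpq]
            exact fun h => (Finset.mem_erase.1 h).1 rfl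
          · intro pp
            refine Fin.cases ?_ (fun q' => ?_) pp
            · rw [Fin.cons_zero]; exact haB
            · rw [Fin.cons_succ]
              exact (Finset.mem_erase.1 (hρgood.2 q')).2
        · rw [ord_img hcard hp hq hpq, img_cons, ord_img hcarde hpe hqe hpq,
            Finset.insert_erase haA]
        · exact Or.inl ⟨by rw [cons_pa, ord_pa hcarde hpe hqe hpq, ord_pa hcard hp hq hpq],
            by rw [cons_pb, ord_pb hcarde hpe hqe hpq, ord_pb hcard hp hq hpq]⟩
      rw [step, ← consMapL_coef, hd, if_pos hρgood, ord_img hcarde hpe hqe hpq,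
        ord_pa hcarde hpe hqe hpq, ord_pb hcarde hpe hqe hpq]
    rw [key x y hx hy hxy hax hay, key y z hy hz hyz hay haz, key x z hx hz hxz hax haz]
    have h2z : (2 : F2) = 0 := by decide
    linear_combination (d (A.erase a) x + d (A.erase a) y + d (A.erase a) z) * h2z
  · intro b hb
    refine Submodule.mem_inf.2 ⟨Submodule.mem_inf.2 ⟨govD_multiT hb,
      (Submodule.mem_iInf _).2 fun jj => (Submodule.mem_iInf _).2 fun hjj => ?_⟩, ?_⟩
    · rw [Submodule.mem_comap, ih]
      exact govD_rest hb hjj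
    · refine (Submodule.mem_iInf _).2 fun j₁ => (Submodule.mem_iInf _).2 fun j₂ =>
        (Submodule.mem_iInf _).2 fun hne => ?_
      rw [LinearMap.mem_ker, LinearMap.sub_apply, sub_eq_zero, LinearMap.comp_apply,
        LinearMap.comp_apply]
      apply ml_ext
      intro ρ
      rw [consMapL_coef, consMapL_coef, consMapL_coef, consMapL_coef]
      exact govD_coef_swap hb j₁ j₂ ρ

lemma consk_eq_govD : ∀ (k : ℕ) (B : Finset ι), Cons (k+2) B = GovD k B := by
  intro k
  induction k with
  | zero => exact cons2_eq_govD
  | succ m ihm =>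
    cases m with
    | zero => exact cons3_eq_govD ihm
    | succ m' => exact consS_eq_govD m' ihm

end Main

/-- For every `i ≥ 2` and every `B ⊆ [n]`, `Cons(V_B, i) = Gov(V_B, i)`. -/
theorem statement1 (n : ℕ) (i : ℕ) (hi : 2 ≤ i) (B : Finset (Fin n)) :
    Cons i B = Gov i B := by
  obtain ⟨k, rfl⟩ : ∃ k, i = k + 2 := ⟨i - 2, by omega⟩
  rw [gov_eq_govD]
  exact consk_eq_govD k B

end HigherGenus
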